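/- Let F : C → D be a (unital) lax monoidal functor between monoidal categories, and let x ∈ C be dualizable with dual x^∨. Suppose the unit map 1_D → F(1_C) and the lax structure maps F(x) ⊗ F(x^∨) → F(x ⊗ x^∨) and F(x^∨) ⊗ F(x) → F(x^∨ ⊗ x) are isomorphisms. Then for every object y ∈ C, the lax structure map F(x) ⊗ F(y) → F(x ⊗ y) is an isomorphism. -/
import Mathlib


open CategoryTheory MonoidalCategory CategoryTheory.Functor


/-- A zigzag identity implies the whiskered zigzag identity. -/
lemma aux_zig' {D : Type*} [Category D] [MonoidalCategory D] (a b : D)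
    (cv : 𝟙_ D ⟶ a ⊗ b) (ev : b ⊗ a ⟶ 𝟙_ D)
    (h : cv ▷ a ≫ (α_ a b a).hom ≫ a ◁ ev = (λ_ a).hom ≫ (ρ_ a).inv) (z : D) :
    (λ_ (a ⊗ z)).inv ≫ cv ▷ (a ⊗ z) ≫ (α_ a b (a ⊗ z)).hom ≫
      a ◁ ((α_ b a z).inv ≫ ev ▷ z ≫ (λ_ z).hom) = 𝟙 (a ⊗ z) := by
  calc
    _ = 𝟙 _ ⊗≫ (cv ▷ a ≫ (α_ a b a).hom ≫ a ◁ ev) ▷ z ⊗≫ 𝟙 (a ⊗ z) := by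
      monoidal
    _ = 𝟙 (a ⊗ z) := by
      rw [h]; monoidal

lemma aux_Z1 {C : Type*} [Category C] [MonoidalCategory C]
    {D : Type*} [Category D] [MonoidalCategory D]
    (F : C ⥤ D) [F.LaxMonoidal] (x xd : C) [ExactPairing x xd]
    (hε : IsIso (LaxMonoidal.ε F)) (hμ₁ : IsIso (LaxMonoidal.μ F x xd)) :
    (LaxMonoidal.ε F ≫ F.map (η_ x xd) ≫ inv (LaxMonoidal.μ F x xd)) ▷ F.obj x ≫
      (α_ (F.obj x) (F.obj xd) (F.obj x)).hom ≫
      F.obj x ◁ (LaxMonoidal.μ F xd x ≫ F.map (ε_ x xd) ≫ inv (LaxMonoidal.ε F)) =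
      (λ_ (F.obj x)).hom ≫ (ρ_ (F.obj x)).inv := by
  rw [← cancel_mono (ρ_ (F.obj x)).hom]
  have h1 : F.obj x ◁ inv (LaxMonoidal.ε F) ≫ (ρ_ (F.obj x)).hom =
      LaxMonoidal.μ F x (𝟙_ C) ≫ F.map (ρ_ x).hom := by
    rw [LaxMonoidal.right_unitality F x, ← MonoidalCategory.whiskerLeft_comp_assoc,
      IsIso.inv_hom_id, MonoidalCategory.whiskerLeft_id, Category.id_comp]
  have h2 : F.obj x ◁ LaxMonoidal.μ F xd x ≫ LaxMonoidal.μ F x (xd ⊗ x) =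
      (α_ (F.obj x) (F.obj xd) (F.obj x)).inv ≫ LaxMonoidal.μ F x xd ▷ F.obj x ≫
        LaxMonoidal.μ F (x ⊗ xd) x ≫ F.map (α_ x xd x).hom := by
    rw [Iso.eq_inv_comp]
    exact (LaxMonoidal.associativity F x xd x).symm
  have hz : η_ x xd ▷ x ≫ (α_ x xd x).hom ≫ x ◁ ε_ x xd ≫ (ρ_ x).hom = (λ_ x).hom := by
    rw [← Category.assoc, ← Category.assoc, Category.assoc (η_ x xd ▷ x),
      ExactPairing.evaluation_coevaluation]
    simp
  calc
    ((LaxMonoidal.ε F ≫ F.map (η_ x xd) ≫ inv (LaxMonoidal.μ F x xd)) ▷ F.obj x ≫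
        (α_ (F.obj x) (F.obj xd) (F.obj x)).hom ≫
        F.obj x ◁ (LaxMonoidal.μ F xd x ≫ F.map (ε_ x xd) ≫ inv (LaxMonoidal.ε F))) ≫
        (ρ_ (F.obj x)).hom
      = LaxMonoidal.ε F ▷ F.obj x ≫ F.map (η_ x xd) ▷ F.obj x ≫
          inv (LaxMonoidal.μ F x xd) ▷ F.obj x ≫ (α_ (F.obj x) (F.obj xd) (F.obj x)).hom ≫
          F.obj x ◁ LaxMonoidal.μ F xd x ≫ LaxMonoidal.μ F x (xd ⊗ x) ≫
          F.map (x ◁ ε_ x xd) ≫ F.map (ρ_ x).hom := by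
        simp only [comp_whiskerRight, MonoidalCategory.whiskerLeft_comp, Category.assoc,
          LaxMonoidal.μ_natural_right_assoc, h1]
    _ = LaxMonoidal.ε F ▷ F.obj x ≫ F.map (η_ x xd) ▷ F.obj x ≫
          LaxMonoidal.μ F (x ⊗ xd) x ≫
          F.map (α_ x xd x).hom ≫ F.map (x ◁ ε_ x xd) ≫ F.map (ρ_ x).hom := by
        rw [reassoc_of% h2, Iso.hom_inv_id_assoc,
          ← comp_whiskerRight_assoc (inv (LaxMonoidal.μ F x xd)) (LaxMonoidal.μ F x xd),
          IsIso.inv_hom_id, MonoidalCategory.id_whiskerRight, Category.id_comp]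
    _ = LaxMonoidal.ε F ▷ F.obj x ≫ LaxMonoidal.μ F (𝟙_ C) x ≫
          F.map (η_ x xd ▷ x ≫ (α_ x xd x).hom ≫ x ◁ ε_ x xd ≫ (ρ_ x).hom) := by
        rw [LaxMonoidal.μ_natural_left_assoc]
        simp only [F.map_comp, Category.assoc]
    _ = (λ_ (F.obj x)).hom := by
        rw [hz]
        exact (LaxMonoidal.left_unitality F x).symm
    _ = ((λ_ (F.obj x)).hom ≫ (ρ_ (F.obj x)).inv) ≫ (ρ_ (F.obj x)).hom := by simp

/-- Let `F : C → D` be a lax monoidal functor and `x` a dualizable object of `C` with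
dual `x^∨` (an exact pairing `ExactPairing x xd`). If the unit map `ε : 𝟙_ D ⟶ F(𝟙_ C)`
and the lax structure maps `F(x) ⊗ F(x^∨) → F(x ⊗ x^∨)` and `F(x^∨) ⊗ F(x) → F(x^∨ ⊗ x)`
are isomorphisms, then for every object `y` of `C` the lax structure map
`F(x) ⊗ F(y) → F(x ⊗ y)` is an isomorphism. -/
theorem stmt_8 {C : Type*} [Category C] [MonoidalCategory C]
    {D : Type*} [Category D] [MonoidalCategory D]
    (F : C ⥤ D) [F.LaxMonoidal] (x xd : C) [ExactPairing x xd]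
    (hε : IsIso (LaxMonoidal.ε F))
    (hμ₁ : IsIso (LaxMonoidal.μ F x xd)) (hμ₂ : IsIso (LaxMonoidal.μ F xd x))
    (y : C) :
    IsIso (LaxMonoidal.μ F x y) := by
  set cv : 𝟙_ D ⟶ F.obj x ⊗ F.obj xd :=
    LaxMonoidal.ε F ≫ F.map (η_ x xd) ≫ inv (LaxMonoidal.μ F x xd) with hcv
  set ev : F.obj xd ⊗ F.obj x ⟶ 𝟙_ D :=
    LaxMonoidal.μ F xd x ≫ F.map (ε_ x xd) ≫ inv (LaxMonoidal.ε F) with hev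
  set s : xd ⊗ (x ⊗ y) ⟶ y := (α_ xd x y).inv ≫ ε_ x xd ▷ y ≫ (λ_ y).hom with hs
  set g : F.obj (x ⊗ y) ⟶ F.obj x ⊗ F.obj y :=
    (λ_ (F.obj (x ⊗ y))).inv ≫ cv ▷ F.obj (x ⊗ y) ≫
      (α_ (F.obj x) (F.obj xd) (F.obj (x ⊗ y))).hom ≫
      F.obj x ◁ (LaxMonoidal.μ F xd (x ⊗ y) ≫ F.map s) with hg
  have hZ1 := aux_Z1 F x xd hε hμ₁
  have hassoc : ∀ (a b c : C), F.obj a ◁ LaxMonoidal.μ F b c ≫ LaxMonoidal.μ F a (b ⊗ c) =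
      (α_ (F.obj a) (F.obj b) (F.obj c)).inv ≫ LaxMonoidal.μ F a b ▷ F.obj c ≫
        LaxMonoidal.μ F (a ⊗ b) c ≫ F.map (α_ a b c).hom := by
    intro a b c
    rw [Iso.eq_inv_comp]
    exact (LaxMonoidal.associativity F a b c).symm
  have hA : LaxMonoidal.μ F x y ≫ g = 𝟙 (F.obj x ⊗ F.obj y) := by
    have inner : F.obj xd ◁ LaxMonoidal.μ F x y ≫ LaxMonoidal.μ F xd (x ⊗ y) ≫ F.map s =
        (α_ (F.obj xd) (F.obj x) (F.obj y)).inv ≫ ev ▷ F.obj y ≫ (λ_ (F.obj y)).hom := by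
      rw [hs, F.map_comp, F.map_comp, reassoc_of% (hassoc xd x y), ← F.map_comp_assoc,
        Iso.hom_inv_id, F.map_id, Category.id_comp, ← LaxMonoidal.μ_natural_left_assoc]
      rw [hev]
      simp
    calc
      LaxMonoidal.μ F x y ≫ g
        = (λ_ (F.obj x ⊗ F.obj y)).inv ≫ cv ▷ (F.obj x ⊗ F.obj y) ≫
            (α_ (F.obj x) (F.obj xd) (F.obj x ⊗ F.obj y)).hom ≫
            F.obj x ◁ (F.obj xd ◁ LaxMonoidal.μ F x y ≫
              LaxMonoidal.μ F xd (x ⊗ y) ≫ F.map s) := by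
          rw [hg, leftUnitor_inv_naturality_assoc, whisker_exchange_assoc,
            associator_naturality_right_assoc, ← MonoidalCategory.whiskerLeft_comp]
      _ = (λ_ (F.obj x ⊗ F.obj y)).inv ≫ cv ▷ (F.obj x ⊗ F.obj y) ≫
            (α_ (F.obj x) (F.obj xd) (F.obj x ⊗ F.obj y)).hom ≫
            F.obj x ◁ ((α_ (F.obj xd) (F.obj x) (F.obj y)).inv ≫ ev ▷ F.obj y ≫
              (λ_ (F.obj y)).hom) := by
          rw [inner]
      _ = 𝟙 (F.obj x ⊗ F.obj y) := aux_zig' (F.obj x) (F.obj xd) cv ev hZ1 (F.obj y)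
  have hB : g ≫ LaxMonoidal.μ F x y = 𝟙 (F.obj (x ⊗ y)) := by
    have hC : (λ_ (x ⊗ y)).inv ≫ η_ x xd ▷ (x ⊗ y) ≫ (α_ x xd (x ⊗ y)).hom ≫ x ◁ s =
        𝟙 (x ⊗ y) := by
      rw [hs]
      exact aux_zig' x xd (η_ x xd) (ε_ x xd)
        (ExactPairing.evaluation_coevaluation x xd) y
    calc
      g ≫ LaxMonoidal.μ F x y
        = (λ_ (F.obj (x ⊗ y))).inv ≫ cv ▷ F.obj (x ⊗ y) ≫
            (α_ (F.obj x) (F.obj xd) (F.obj (x ⊗ y))).hom ≫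
            F.obj x ◁ LaxMonoidal.μ F xd (x ⊗ y) ≫
            LaxMonoidal.μ F x (xd ⊗ (x ⊗ y)) ≫ F.map (x ◁ s) := by
          rw [hg]
          simp only [Category.assoc, MonoidalCategory.whiskerLeft_comp,
            LaxMonoidal.μ_natural_right]
      _ = (λ_ (F.obj (x ⊗ y))).inv ≫ LaxMonoidal.ε F ▷ F.obj (x ⊗ y) ≫
            F.map (η_ x xd) ▷ F.obj (x ⊗ y) ≫
            LaxMonoidal.μ F (x ⊗ xd) (x ⊗ y) ≫
            F.map ((α_ x xd (x ⊗ y)).hom ≫ x ◁ s) := by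
          rw [reassoc_of% (hassoc x xd (x ⊗ y)), Iso.hom_inv_id_assoc, hcv]
          simp only [comp_whiskerRight, Category.assoc, F.map_comp]
          rw [← comp_whiskerRight_assoc (inv (LaxMonoidal.μ F x xd)) (LaxMonoidal.μ F x xd),
            IsIso.inv_hom_id, MonoidalCategory.id_whiskerRight, Category.id_comp]
      _ = F.map ((λ_ (x ⊗ y)).inv ≫ η_ x xd ▷ (x ⊗ y) ≫ (α_ x xd (x ⊗ y)).hom ≫ x ◁ s) := by
          rw [LaxMonoidal.μ_natural_left_assoc, LaxMonoidal.left_unitality_inv_assoc]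
          simp only [F.map_comp, Category.assoc]
      _ = 𝟙 (F.obj (x ⊗ y)) := by rw [hC, F.map_id]
  exact ⟨g, hA, hB⟩
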